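/- The function f(β) = 1 − h(1/2 + (1/2)√((β/2)² − 1)) defined for β ∈ [2, 2√2], where h is the binary entropy, is convex and increasing on [2, 2√2], equals 0 at β = 2 and equals 1 at β = 2√2. -/

import Mathlib

open Real

/-- Binary entropy h(p) = −p log₂ p − (1−p) log₂(1−p) (with h(0) = h(1) = 0,
as Real.logb 2 0 = 0). -/
noncomputable def binEnt2 (p : ℝ) : ℝ :=
  -(p * Real.logb 2 p) - (1 - p) * Real.logb 2 (1 - p)

namespace VNaux

/-- natural-log version of binary entropy -/
noncomputable def ent (x : ℝ) : ℝ := -(x * Real.log x) - (1 - x) * Real.log (1 - x)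

lemma binEnt2_eq (x : ℝ) : binEnt2 x = ent x / Real.log 2 := by
  unfold binEnt2 ent Real.logb
  ring

lemma ent_hasDerivAt {p : ℝ} (h0 : 0 < p) (h1 : p < 1) :
    HasDerivAt ent (Real.log (1 - p) - Real.log p) p := by
  have h1p : (0:ℝ) < 1 - p := by linarith
  have hA : HasDerivAt (fun x : ℝ => x * Real.log x) (Real.log p + 1) p := by
    have h := (hasDerivAt_id p).mul (Real.hasDerivAt_log h0.ne')
    refine h.congr_deriv (Eq.symm ?_)
    field_simp
    simp only [id_eq]; ring
  have hi : HasDerivAt (fun x : ℝ => 1 - x) (-1) p := by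
    simpa using (hasDerivAt_id p).const_sub 1
  have hB : HasDerivAt (fun x : ℝ => (1 - x) * Real.log (1 - x))
      (-(Real.log (1 - p) + 1)) p := by
    have hlog : HasDerivAt (fun x : ℝ => Real.log (1 - x)) (-1 / (1 - p)) p :=
      hi.log h1p.ne'
    have h := hi.mul hlog
    refine h.congr_deriv (Eq.symm ?_)
    field_simp
    ring
  have h := hA.neg.sub hB
  refine h.congr_deriv (Eq.symm ?_)
  ring

lemma binEnt2_hasDerivAt {p : ℝ} (h0 : 0 < p) (h1 : p < 1) :
    HasDerivAt binEnt2 ((Real.log (1 - p) - Real.log p) / Real.log 2) p := by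
  have h := (ent_hasDerivAt h0 h1).div_const (Real.log 2)
  simpa only [← binEnt2_eq] using h

lemma continuous_ent : Continuous ent := by
  unfold ent
  exact (Real.continuous_mul_log.neg).sub
    (Real.continuous_mul_log.comp (continuous_const.sub continuous_id))

lemma continuous_binEnt2 : Continuous binEnt2 := by
  have h : binEnt2 = fun x => ent x / Real.log 2 := funext binEnt2_eq
  rw [h]
  exact continuous_ent.div_const _

/-- Key inequality: `log ((1+s)/(1-s)) ≤ 2s/(1-s²)` on `[0,1)`. -/
lemma log_ratio_le {s : ℝ} (h0 : 0 ≤ s) (h1 : s < 1) :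
    Real.log (1 + s) - Real.log (1 - s) ≤ 2 * s / (1 - s ^ 2) := by
  set q : ℝ → ℝ := fun t => 2 * t / (1 - t ^ 2) - (Real.log (1 + t) - Real.log (1 - t)) with hq
  have key : MonotoneOn q (Set.Ico (0:ℝ) 1) := by
    apply monotoneOn_of_hasDerivWithinAt_nonneg (convex_Ico 0 1)
      (f' := fun t => 4 * t ^ 2 / (1 - t ^ 2) ^ 2)
    · -- continuity
      apply ContinuousOn.sub
      · apply ContinuousOn.div (by fun_prop) (by fun_prop)
        intro t ht
        have h1 := ht.1; have h2 := ht.2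
        nlinarith
      · apply ContinuousOn.sub
        · apply ContinuousOn.log (by fun_prop)
          intro t ht; nlinarith [ht.1, ht.2]
        · apply ContinuousOn.log (by fun_prop)
          intro t ht; nlinarith [ht.1, ht.2]
    · rw [interior_Ico]
      intro t ht
      have ht0 : (0:ℝ) < t := ht.1
      have ht1 : t < 1 := ht.2
      have hden : (0:ℝ) < 1 - t ^ 2 := by nlinarith
      have h1t : (0:ℝ) < 1 + t := by linarith
      have h1t' : (0:ℝ) < 1 - t := by linarith
      have hd1 : HasDerivAt (fun t : ℝ => 2 * t / (1 - t ^ 2))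
          ((2 * (1 - t ^ 2) - 2 * t * (-(2 * t))) / (1 - t ^ 2) ^ 2) t := by
        have hn : HasDerivAt (fun t : ℝ => 2 * t) 2 t := by
          simpa using (hasDerivAt_id t).const_mul 2
        have hdd : HasDerivAt (fun t : ℝ => 1 - t ^ 2) (-(2 * t)) t := by
          simpa using (hasDerivAt_pow 2 t).const_sub 1
        exact hn.div hdd hden.ne'
      have hd2 : HasDerivAt (fun t : ℝ => Real.log (1 + t)) (1 / (1 + t)) t := by
        have h := (hasDerivAt_id t).const_add 1
        have h' : HasDerivAt (fun t : ℝ => 1 + t) 1 t := by simpa using h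
        exact h'.log h1t.ne'
      have hd3 : HasDerivAt (fun t : ℝ => Real.log (1 - t)) (-1 / (1 - t)) t := by
        have h : HasDerivAt (fun t : ℝ => 1 - t) (-1) t := by
          simpa using (hasDerivAt_id t).const_sub 1
        exact h.log h1t'.ne'
      have h := hd1.sub (hd2.sub hd3)
      have heq : (2 * (1 - t ^ 2) - 2 * t * (-(2 * t))) / (1 - t ^ 2) ^ 2 -
          (1 / (1 + t) - -1 / (1 - t)) = 4 * t ^ 2 / (1 - t ^ 2) ^ 2 := by
        field_simp
        ring
      rw [heq] at h
      exact h.hasDerivWithinAt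
    · rw [interior_Ico]
      intro t ht
      have hden : (0:ℝ) < 1 - t ^ 2 := by nlinarith [ht.1, ht.2]
      positivity
  have h0m : (0:ℝ) ∈ Set.Ico (0:ℝ) 1 := ⟨le_refl _, by norm_num⟩
  have hsm : s ∈ Set.Ico (0:ℝ) 1 := ⟨h0, h1⟩
  have hle := key h0m hsm h0
  have hq0 : q 0 = 0 := by simp [hq]
  rw [hq0] at hle
  have hle' : 0 ≤ 2 * s / (1 - s ^ 2) - (Real.log (1 + s) - Real.log (1 - s)) := hle
  linarith

/-- the derivative of the bound function, as a function of `s` -/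
noncomputable def psi (s : ℝ) : ℝ :=
  Real.sqrt (1 + s ^ 2) * (Real.log (1 + s) - Real.log (1 - s)) / (4 * Real.log 2 * s)

noncomputable def psi' (s : ℝ) : ℝ :=
  (2 * s * (1 + s ^ 2) - (1 - s ^ 2) * (Real.log (1 + s) - Real.log (1 - s))) /
    (4 * Real.log 2 * s ^ 2 * (1 - s ^ 2) * Real.sqrt (1 + s ^ 2))

lemma psi_hasDerivAt {s : ℝ} (h0 : 0 < s) (h1 : s < 1) : HasDerivAt psi (psi' s) s := by
  have h1s : (0:ℝ) < 1 + s := by linarith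
  have h1s' : (0:ℝ) < 1 - s := by linarith
  have hs2 : (0:ℝ) < 1 + s ^ 2 := by positivity
  have hr : (0:ℝ) < Real.sqrt (1 + s ^ 2) := Real.sqrt_pos.mpr hs2
  have hrsq : Real.sqrt (1 + s ^ 2) ^ 2 = 1 + s ^ 2 := Real.sq_sqrt hs2.le
  have hlog2 : (0:ℝ) < Real.log 2 := Real.log_pos one_lt_two
  have hN1 : HasDerivAt (fun s : ℝ => Real.sqrt (1 + s ^ 2))
      (2 * s / (2 * Real.sqrt (1 + s ^ 2))) s := by
    have hin : HasDerivAt (fun s : ℝ => 1 + s ^ 2) (2 * s) s := by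
      simpa using (hasDerivAt_pow 2 s).const_add 1
    exact hin.sqrt hs2.ne'
  have hd2 : HasDerivAt (fun t : ℝ => Real.log (1 + t)) (1 / (1 + s)) s := by
    have h : HasDerivAt (fun t : ℝ => 1 + t) 1 s := by
      simpa using (hasDerivAt_id s).const_add 1
    exact h.log h1s.ne'
  have hd3 : HasDerivAt (fun t : ℝ => Real.log (1 - t)) (-1 / (1 - s)) s := by
    have h : HasDerivAt (fun t : ℝ => 1 - t) (-1) s := by
      simpa using (hasDerivAt_id s).const_sub 1
    exact h.log h1s'.ne'
  have hN := hN1.mul (hd2.sub hd3)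
  have hden : HasDerivAt (fun s : ℝ => 4 * Real.log 2 * s) (4 * Real.log 2) s := by
    simpa using (hasDerivAt_id s).const_mul (4 * Real.log 2)
  have hdenne : 4 * Real.log 2 * s ≠ 0 := by positivity
  have h := hN.div hden hdenne
  refine h.congr_deriv (Eq.symm ?_)
  simp only [Pi.mul_apply, Pi.sub_apply]
  set r := Real.sqrt (1 + s ^ 2) with hrdef
  set L := Real.log (1 + s) - Real.log (1 - s) with hLdef
  unfold psi'
  rw [← hrdef, ← hLdef]
  have key : 2 * s * (1 + s ^ 2) - (1 - s ^ 2) * L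
      = s ^ 2 * L * (1 - s ^ 2) + 2 * s * r ^ 2 - r ^ 2 * (1 - s ^ 2) * L := by
    rw [hrsq]; ring
  have h1s2 : (0:ℝ) < 1 - s ^ 2 := by nlinarith
  have hd1 : (0:ℝ) < 4 * Real.log 2 * s ^ 2 * (1 - s ^ 2) * r :=
    mul_pos (mul_pos (by positivity) h1s2) hr
  rw [key, div_eq_div_iff hd1.ne' (by positivity)]
  field_simp
  ring

lemma psi'_nonneg {s : ℝ} (h0 : 0 < s) (h1 : s < 1) : 0 ≤ psi' s := by
  have h1s : (0:ℝ) < 1 + s := by linarith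
  have h1s' : (0:ℝ) < 1 - s := by linarith
  have hs2 : (0:ℝ) < 1 - s ^ 2 := by nlinarith
  have hL := log_ratio_le h0.le h1
  have hL' : (Real.log (1 + s) - Real.log (1 - s)) * (1 - s ^ 2) ≤ 2 * s := by
    rw [le_div_iff₀ hs2] at hL
    linarith
  have hnum : 0 ≤ 2 * s * (1 + s ^ 2) -
      (1 - s ^ 2) * (Real.log (1 + s) - Real.log (1 - s)) := by nlinarith
  have hlog2 : (0:ℝ) < Real.log 2 := Real.log_pos one_lt_two
  have hr : (0:ℝ) < Real.sqrt (1 + s ^ 2) := Real.sqrt_pos.mpr (by positivity)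
  have hd1 : (0:ℝ) < 4 * Real.log 2 * s ^ 2 * (1 - s ^ 2) * Real.sqrt (1 + s ^ 2) :=
    mul_pos (mul_pos (by positivity) hs2) hr
  exact div_nonneg hnum hd1.le

lemma psi_mono : MonotoneOn psi (Set.Ioo (0:ℝ) 1) := by
  apply monotoneOn_of_hasDerivWithinAt_nonneg (convex_Ioo 0 1) (f' := psi')
  · exact fun x hx => (psi_hasDerivAt hx.1 hx.2).continuousAt.continuousWithinAt
  · rw [interior_Ioo]
    exact fun x hx => (psi_hasDerivAt hx.1 hx.2).hasDerivWithinAt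
  · rw [interior_Ioo]
    exact fun x hx => psi'_nonneg hx.1 hx.2

/-- the `s` variable -/
noncomputable def sb (β : ℝ) : ℝ := Real.sqrt ((β / 2) ^ 2 - 1)

lemma sb_mem {β : ℝ} (hβ : β ∈ Set.Ioo (2:ℝ) (2 * Real.sqrt 2)) :
    sb β ∈ Set.Ioo (0:ℝ) 1 := by
  have h2 : Real.sqrt 2 ^ 2 = 2 := Real.sq_sqrt (by norm_num)
  have hβ2 : β < 2 * Real.sqrt 2 := hβ.2
  have hβ1 : 2 < β := hβ.1
  have hsq : β ^ 2 < 8 := by nlinarith [Real.sqrt_nonneg 2]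
  have hpos : 0 < (β / 2) ^ 2 - 1 := by nlinarith
  have hlt : (β / 2) ^ 2 - 1 < 1 := by nlinarith
  constructor
  · exact Real.sqrt_pos.mpr hpos
  · have hs2 : sb β ^ 2 < 1 := by
      rw [sb, Real.sq_sqrt hpos.le]; linarith
    nlinarith [Real.sqrt_nonneg ((β / 2) ^ 2 - 1)]

/-- the claimed derivative of the bound function -/
noncomputable def Fd (β : ℝ) : ℝ :=
  (Real.log (1 + sb β) - Real.log (1 - sb β)) * β / (8 * Real.log 2 * sb β)

lemma hasDerivAt_F {β : ℝ} (hβ : β ∈ Set.Ioo (2:ℝ) (2 * Real.sqrt 2)) :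
    HasDerivAt (fun β : ℝ => 1 - binEnt2 (1 / 2 + (1 / 2) * Real.sqrt ((β / 2) ^ 2 - 1)))
      (Fd β) β := by
  obtain ⟨hs0, hs1⟩ := sb_mem hβ
  rw [sb] at hs0 hs1
  have hβ0 : (0:ℝ) < β := by linarith [hβ.1]
  have hpos : (0:ℝ) < (β / 2) ^ 2 - 1 := by nlinarith [hβ.1]
  have hlog2 : (0:ℝ) < Real.log 2 := Real.log_pos one_lt_two
  simp only [Fd, sb]
  set s := Real.sqrt ((β / 2) ^ 2 - 1) with hsdef
  have h1s : (0:ℝ) < 1 + s := by linarith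
  have h1s' : (0:ℝ) < 1 - s := by linarith
  -- derivative of the inner function
  have hp : HasDerivAt (fun β : ℝ => 1 / 2 + (1 / 2) * Real.sqrt ((β / 2) ^ 2 - 1))
      (β / (8 * s)) β := by
    have hin : HasDerivAt (fun β : ℝ => (β / 2) ^ 2 - 1)
        ((2:ℕ) * (β / 2) ^ (2 - 1) * (1 / 2)) β :=
      (((hasDerivAt_id β).div_const 2).pow 2).sub_const 1
    have hsq : HasDerivAt (fun β : ℝ => Real.sqrt ((β / 2) ^ 2 - 1))
        ((2:ℕ) * (β / 2) ^ (2 - 1) * (1 / 2) / (2 * Real.sqrt ((β / 2) ^ 2 - 1))) β :=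
      hin.sqrt hpos.ne'
    have h := (hsq.const_mul (1 / 2 : ℝ)).const_add (1 / 2 : ℝ)
    refine h.congr_deriv (Eq.symm ?_)
    rw [← hsdef]
    push_cast
    rw [pow_one]
    field_simp
    norm_num
  have hpval0 : (0:ℝ) < 1 / 2 + (1 / 2) * s := by linarith
  have hpval1 : 1 / 2 + (1 / 2) * s < 1 := by linarith
  have hb := binEnt2_hasDerivAt hpval0 hpval1
  have hcomp := hb.comp β hp
  have hF := hcomp.const_sub 1
  refine hF.congr_deriv (Eq.symm ?_)
  have l1 : Real.log (1 / 2 + 1 / 2 * s) = Real.log (1 + s) - Real.log 2 := by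
    rw [show (1:ℝ) / 2 + 1 / 2 * s = (1 + s) / 2 by ring,
      Real.log_div h1s.ne' (by norm_num)]
  have l2 : Real.log (1 - (1 / 2 + 1 / 2 * s)) = Real.log (1 - s) - Real.log 2 := by
    rw [show (1:ℝ) - (1 / 2 + 1 / 2 * s) = (1 - s) / 2 by ring,
      Real.log_div h1s'.ne' (by norm_num)]
  rw [l1, l2]
  have hs0' : s ≠ 0 := hs0.ne'
  field_simp
  ring

lemma Fd_eq_psi {β : ℝ} (hβ : β ∈ Set.Ioo (2:ℝ) (2 * Real.sqrt 2)) :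
    Fd β = psi (sb β) := by
  obtain ⟨hs0, hs1⟩ := sb_mem hβ
  have hβ0 : (0:ℝ) < β := by linarith [hβ.1]
  have hpos : (0:ℝ) ≤ (β / 2) ^ 2 - 1 := by nlinarith [hβ.1]
  have hsq : 1 + sb β ^ 2 = (β / 2) ^ 2 := by
    rw [sb, Real.sq_sqrt hpos]; ring
  have hroot : Real.sqrt (1 + sb β ^ 2) = β / 2 := by
    rw [hsq, Real.sqrt_sq (by positivity)]
  have hlog2 : (0:ℝ) < Real.log 2 := Real.log_pos one_lt_two
  unfold Fd psi
  rw [hroot]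
  have hs0' : sb β ≠ 0 := hs0.ne'
  field_simp
  ring

lemma sb_mono {a b : ℝ} (ha : a ∈ Set.Ioo (2:ℝ) (2 * Real.sqrt 2))
    (hb : b ∈ Set.Ioo (2:ℝ) (2 * Real.sqrt 2)) (hab : a ≤ b) : sb a ≤ sb b := by
  apply Real.sqrt_le_sqrt
  nlinarith [ha.1, hb.1]

lemma continuous_F :
    Continuous (fun β : ℝ => 1 - binEnt2 (1 / 2 + (1 / 2) * Real.sqrt ((β / 2) ^ 2 - 1))) := by
  apply continuous_const.sub
  apply continuous_binEnt2.comp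
  apply continuous_const.add
  apply continuous_const.mul
  apply Real.continuous_sqrt.comp
  fun_prop

end VNaux

open VNaux in
/-- f(β) = 1 − h(1/2 + (1/2)√((β/2)² − 1)) is convex and increasing on
[2, 2√2], with f(2) = 0 and f(2√2) = 1. -/
theorem vonNeumann_bound_convex_increasing :
    ConvexOn ℝ (Set.Icc 2 (2 * sqrt 2))
        (fun β : ℝ => 1 - binEnt2 (1 / 2 + (1 / 2) * sqrt ((β / 2) ^ 2 - 1))) ∧
    MonotoneOn (fun β : ℝ => 1 - binEnt2 (1 / 2 + (1 / 2) * sqrt ((β / 2) ^ 2 - 1)))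
        (Set.Icc 2 (2 * sqrt 2)) ∧
    (1 - binEnt2 (1 / 2 + (1 / 2) * sqrt (((2 : ℝ) / 2) ^ 2 - 1)) = 0) ∧
    (1 - binEnt2 (1 / 2 + (1 / 2) * sqrt ((2 * sqrt 2 / 2) ^ 2 - 1)) = 1) := by
  have hint : interior (Set.Icc (2:ℝ) (2 * Real.sqrt 2)) = Set.Ioo 2 (2 * Real.sqrt 2) :=
    interior_Icc
  set F := fun β : ℝ => 1 - binEnt2 (1 / 2 + (1 / 2) * Real.sqrt ((β / 2) ^ 2 - 1)) with hF
  have hdiff : DifferentiableOn ℝ F (interior (Set.Icc (2:ℝ) (2 * Real.sqrt 2))) := by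
    rw [hint]
    exact fun x hx => (hasDerivAt_F hx).differentiableAt.differentiableWithinAt
  have hderiv : ∀ β ∈ Set.Ioo (2:ℝ) (2 * Real.sqrt 2), deriv F β = Fd β :=
    fun β hβ => (hasDerivAt_F hβ).deriv
  have hlog2 : (0:ℝ) < Real.log 2 := Real.log_pos one_lt_two
  have hmono : MonotoneOn (deriv F) (interior (Set.Icc (2:ℝ) (2 * Real.sqrt 2))) := by
    rw [hint]
    intro a ha b hb hab
    rw [hderiv a ha, hderiv b hb, Fd_eq_psi ha, Fd_eq_psi hb]
    exact psi_mono (sb_mem ha) (sb_mem hb) (sb_mono ha hb hab)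
  have hderiv_nonneg : ∀ β ∈ interior (Set.Icc (2:ℝ) (2 * Real.sqrt 2)), 0 ≤ deriv F β := by
    rw [hint]
    intro β hβ
    rw [hderiv β hβ]
    obtain ⟨hs0, hs1⟩ := sb_mem hβ
    have hβ0 : (0:ℝ) < β := by linarith [hβ.1]
    have hL : 0 ≤ Real.log (1 + sb β) - Real.log (1 - sb β) := by
      have h := Real.log_le_log (by linarith : (0:ℝ) < 1 - sb β)
        (by linarith : (1:ℝ) - sb β ≤ 1 + sb β)
      linarith
    unfold Fd
    positivity
  refine ⟨?_, ?_, ?_, ?_⟩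
  · exact hmono.convexOn_of_deriv (convex_Icc _ _) continuous_F.continuousOn hdiff
  · exact monotoneOn_of_deriv_nonneg (convex_Icc _ _) continuous_F.continuousOn hdiff
      hderiv_nonneg
  · have h1 : ((2:ℝ) / 2) ^ 2 - 1 = 0 := by norm_num
    rw [h1, Real.sqrt_zero]
    have h2 : (1:ℝ) / 2 + 1 / 2 * 0 = 1 / 2 := by norm_num
    rw [h2]
    have hlb : Real.logb 2 (1 / 2 : ℝ) = -1 := by
      rw [show (1:ℝ) / 2 = 2⁻¹ by norm_num, Real.logb_inv,
        Real.logb_self_eq_one (by norm_num : (1:ℝ) < 2)]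
    have h3 : binEnt2 (1 / 2) = 1 := by
      unfold binEnt2
      rw [show (1:ℝ) - 1 / 2 = 1 / 2 by norm_num, hlb]
      norm_num
    rw [h3]
    norm_num
  · have h1 : (2 * Real.sqrt 2 / 2) ^ 2 - 1 = 1 := by
      rw [show 2 * Real.sqrt 2 / 2 = Real.sqrt 2 by ring, Real.sq_sqrt (by norm_num : (0:ℝ) ≤ 2)]
      norm_num
    rw [h1, Real.sqrt_one]
    have h2 : (1:ℝ) / 2 + 1 / 2 * 1 = 1 := by norm_num
    rw [h2]
    have h3 : binEnt2 1 = 0 := by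
      unfold binEnt2
      norm_num
    rw [h3]
    norm_num
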